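/- arXiv:2202.12594 — 7 statements merged into one kernel-verified Lean document; each statement's English description precedes it below -/
import Mathlib

section
/- Let m ≥ 1 and consider 0/1-valued variables x_1,…,x_m, x_1',…,x_m' and α₀,α₁,α₁',α₂,α₂',α₃,α₃' (write A for the set of the seven α-variables). Suppose that: (G1) for every α ∈ A, with B some fixed 3-element subset of A∖{α}, both ∑_{i∈[m]} x_i + ∑_{β∈B} β + 1 ≤ α + ∑_{i∈[m]} x_i' + ∑_{β∈A∖(B∪{α})} β and ∑_{i∈[m]} x_i' + ∑_{β∈A∖(B∪{α})} β + 1 ≤ α + ∑_{i∈[m]} x_i + ∑_{β∈B} β hold; and (G2) for every i ∈ [m], the four inequalities x_i + ∑_{j≠i} x_j + 1 ≤ α₀ + x_i' + ∑_{j≠i} x_j', x_i + ∑_{j≠i} x_j' + 1 ≤ α₀ + x_i' + ∑_{j≠i} x_j, x_i' + ∑_{j≠i} x_j + 1 ≤ α₀ + x_i + ∑_{j≠i} x_j', and x_i' + ∑_{j≠i} x_j' + 1 ≤ α₀ + x_i + ∑_{j≠i} x_j all hold. Then α = 1 for every α ∈ A, and x_i = x_i' for every i ∈ [m]. -/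
open Finset

/-!
Each gadget consists of two inequalities `u + p ≤ v + q` and `u + q ≤ v + p` whose sides are
swapped; adding them and cancelling `p + q` gives `u ≤ v`. For (G1) this reads `1 ≤ α`, so every
`α` equals `1`. Once `α₀ = 1` cancels, the four inequalities of (G2) are two such pairs, giving
`x i ≤ x' i` and `x' i ≤ x i`.
-/

theorem le_of_add_le_add_of_add_le_add_swap {M : Type*} [AddCommMonoid M] [LinearOrder M]
    [IsOrderedCancelAddMonoid M] {u v p q : M} (h₁ : u + p ≤ v + q) (h₂ : u + q ≤ v + p) :
    u ≤ v := by
  by_contra! h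
  have hsum : u + u + (p + q) ≤ v + v + (p + q) := by
    calc u + u + (p + q) = u + p + (u + q) := add_add_add_comm ..
      _ ≤ v + q + (v + p) := add_le_add h₁ h₂
      _ = v + v + (p + q) := by rw [add_add_add_comm, add_comm q p]
  exact (le_of_add_le_add_right hsum).not_gt (add_lt_add h h)

theorem gadget_forces_alpha_one_and_x_eq_x'_general (m : ℕ)
    (x x' : Fin m → ℕ) (α : Fin 7 → ℕ)
    (hα : ∀ a, α a ≤ 1)
    (hG1 : ∀ a : Fin 7, ∃ B : Finset (Fin 7), B ⊆ Finset.univ \ {a} ∧ B.card = 3 ∧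
      ((∑ i, x i) + (∑ b ∈ B, α b) + 1 ≤
          α a + (∑ i, x' i) + ∑ b ∈ Finset.univ \ (B ∪ {a}), α b) ∧
      ((∑ i, x' i) + (∑ b ∈ Finset.univ \ (B ∪ {a}), α b) + 1 ≤
          α a + (∑ i, x i) + ∑ b ∈ B, α b))
    (hG2 : ∀ i : Fin m,
      (x i + (∑ j ∈ Finset.univ.erase i, x j) + 1 ≤
          α 0 + x' i + ∑ j ∈ Finset.univ.erase i, x' j) ∧
      (x i + (∑ j ∈ Finset.univ.erase i, x' j) + 1 ≤
          α 0 + x' i + ∑ j ∈ Finset.univ.erase i, x j) ∧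
      (x' i + (∑ j ∈ Finset.univ.erase i, x j) + 1 ≤
          α 0 + x i + ∑ j ∈ Finset.univ.erase i, x' j) ∧
      (x' i + (∑ j ∈ Finset.univ.erase i, x' j) + 1 ≤
          α 0 + x i + ∑ j ∈ Finset.univ.erase i, x j)) :
    (∀ a, α a = 1) ∧ ∀ i, x i = x' i := by
  have hα_eq_one : ∀ a, α a = 1 := fun a => by
    obtain ⟨B, -, -, h₁, h₂⟩ := hG1 a
    exact (hα a).antisymm (le_of_add_le_add_of_add_le_add_swap
      (p := (∑ i, x i) + ∑ b ∈ B, α b)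
      (q := (∑ i, x' i) + ∑ b ∈ univ \ (B ∪ {a}), α b) (by omega) (by omega))
  refine ⟨hα_eq_one, fun i => ?_⟩
  obtain ⟨h₁, h₂, h₃, h₄⟩ := hG2 i
  rw [hα_eq_one 0] at h₁ h₂ h₃ h₄
  exact le_antisymm
    (le_of_add_le_add_of_add_le_add_swap (p := ∑ j ∈ univ.erase i, x j)
      (q := ∑ j ∈ univ.erase i, x' j) (by omega) (by omega))
    (le_of_add_le_add_of_add_le_add_swap (p := ∑ j ∈ univ.erase i, x j)
      (q := ∑ j ∈ univ.erase i, x' j) (by omega) (by omega))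

/-- The gadget inequalities (G1) and (G2) force `α = 1` for all
seven `α`-variables and `x i = x' i` for all `i ∈ [m]`.  The seven
`α`-variables `α₀, α₁, α₁', α₂, α₂', α₃, α₃'` are encoded as `α : Fin 7 → ℕ`. -/
theorem gadget_forces_alpha_one_and_x_eq_x' (m : ℕ) (hm : 1 ≤ m)
    (x x' : Fin m → ℕ) (α : Fin 7 → ℕ)
    (hx : ∀ i, x i ≤ 1) (hx' : ∀ i, x' i ≤ 1) (hα : ∀ a, α a ≤ 1)
    (hG1 : ∀ a : Fin 7, ∃ B : Finset (Fin 7), B ⊆ Finset.univ \ {a} ∧ B.card = 3 ∧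
      ((∑ i, x i) + (∑ b ∈ B, α b) + 1 ≤
          α a + (∑ i, x' i) + ∑ b ∈ Finset.univ \ (B ∪ {a}), α b) ∧
      ((∑ i, x' i) + (∑ b ∈ Finset.univ \ (B ∪ {a}), α b) + 1 ≤
          α a + (∑ i, x i) + ∑ b ∈ B, α b))
    (hG2 : ∀ i : Fin m,
      (x i + (∑ j ∈ Finset.univ.erase i, x j) + 1 ≤
          α 0 + x' i + ∑ j ∈ Finset.univ.erase i, x' j) ∧
      (x i + (∑ j ∈ Finset.univ.erase i, x' j) + 1 ≤
          α 0 + x' i + ∑ j ∈ Finset.univ.erase i, x j) ∧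
      (x' i + (∑ j ∈ Finset.univ.erase i, x j) + 1 ≤
          α 0 + x i + ∑ j ∈ Finset.univ.erase i, x' j) ∧
      (x' i + (∑ j ∈ Finset.univ.erase i, x' j) + 1 ≤
          α 0 + x i + ∑ j ∈ Finset.univ.erase i, x j)) :
    (∀ a, α a = 1) ∧ ∀ i, x i = x' i :=
  gadget_forces_alpha_one_and_x_eq_x'_general m x x' α hα hG1 hG2
end

section
/- Let φ be a 3-CNF formula over m Boolean variables in which every clause uses three distinct variables, and let S(φ) be the associated system of inequalities over 0/1-valued variables x_1,…,x_m, x_1',…,x_m', α₀, α₁, α₁', α₂, α₂', α₃, α₃' consisting of the 14 group-(G1) inequalities, the 4m group-(G2) inequalities, and one clause inequality per clause of φ. If σ : [m] → {0,1} is a satisfying assignment of φ, then the assignment x_i = x_i' = σ(i) for all i ∈ [m] and α = 1 for all seven α-variables satisfies every inequality of S(φ). -/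
open Finset

/-- A 3-CNF clause over `m` Boolean variables using three distinct variables
`i, j, t`, where the first `neg` of the three literals are negated
(negated variables are listed first). -/
structure Clause3 (m : ℕ) where
  i : Fin m
  j : Fin m
  t : Fin m
  /-- the number of negated literals; the negated variables come first -/
  neg : Fin 4
  hij : i ≠ j
  hit : i ≠ t
  hjt : j ≠ t

/-- Satisfaction of a clause by a 0/1 assignment `σ`: the sum of the
(possibly negated) literal values is at least 1. -/
def clauseSat {m : ℕ} (σ : Fin m → ℕ) (c : Clause3 m) : Prop :=
  if c.neg = 0 then 1 ≤ σ c.i + σ c.j + σ c.t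
  else if c.neg = 1 then 1 ≤ (1 - σ c.i) + σ c.j + σ c.t
  else if c.neg = 2 then 1 ≤ (1 - σ c.i) + (1 - σ c.j) + σ c.t
  else 1 ≤ (1 - σ c.i) + (1 - σ c.j) + (1 - σ c.t)

/-- The characteristic inequality of the agent corresponding to a clause.
The seven `α`-variables `α₀, α₁, α₁', α₂, α₂', α₃, α₃'` are `α 0, …, α 6`. -/
def clauseIneq {m : ℕ} (x x' : Fin m → ℕ) (α : Fin 7 → ℕ) (c : Clause3 m) : Prop :=
  if c.neg = 0 then
    1 + α 0 ≤ (x c.i + x c.j + x c.t) + (x' c.i + x' c.j + x' c.t)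
  else if c.neg = 1 then
    1 + α 0 + x c.i + x' c.i ≤ (α 1 + α 2) + (x c.j + x c.t) + (x' c.j + x' c.t)
  else if c.neg = 2 then
    1 + α 0 + (x c.i + x c.j) + (x' c.i + x' c.j) ≤
      (α 1 + α 2) + (α 3 + α 4) + x c.t + x' c.t
  else
    1 + α 0 + (x c.i + x c.j + x c.t) + (x' c.i + x' c.j + x' c.t) ≤
      (α 1 + α 2) + (α 3 + α 4) + (α 5 + α 6)

/-- The 14 group-(G1) inequalities, where for each `α`-variable `a` the fixed
3-element subset `B a ⊆ A \ {a}` has been chosen. -/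
def G1ineq {m : ℕ} (x x' : Fin m → ℕ) (α : Fin 7 → ℕ)
    (B : Fin 7 → Finset (Fin 7)) : Prop :=
  ∀ a : Fin 7,
    ((∑ i, x i) + (∑ b ∈ B a, α b) + 1 ≤
        α a + (∑ i, x' i) + ∑ b ∈ Finset.univ \ (B a ∪ {a}), α b) ∧
    ((∑ i, x' i) + (∑ b ∈ Finset.univ \ (B a ∪ {a}), α b) + 1 ≤
        α a + (∑ i, x i) + ∑ b ∈ B a, α b)

/-- The 4m group-(G2) inequalities. -/
def G2ineq {m : ℕ} (x x' : Fin m → ℕ) (α : Fin 7 → ℕ) : Prop :=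
  ∀ i : Fin m,
    (x i + (∑ j ∈ Finset.univ.erase i, x j) + 1 ≤
        α 0 + x' i + ∑ j ∈ Finset.univ.erase i, x' j) ∧
    (x i + (∑ j ∈ Finset.univ.erase i, x' j) + 1 ≤
        α 0 + x' i + ∑ j ∈ Finset.univ.erase i, x j) ∧
    (x' i + (∑ j ∈ Finset.univ.erase i, x j) + 1 ≤
        α 0 + x i + ∑ j ∈ Finset.univ.erase i, x' j) ∧
    (x' i + (∑ j ∈ Finset.univ.erase i, x' j) + 1 ≤
        α 0 + x i + ∑ j ∈ Finset.univ.erase i, x j)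

/-! With `x = x' = σ` and every `α` equal to `1`, the `x`- and `x'`-sums on the two sides of each (G1)
and (G2) inequality coincide, and the `α`-terms leave exactly the slack needed for the `+ 1`: in (G1)
because `B a` and its complement in `A ∖ {a}` both have three elements. A clause inequality becomes
`2 ≤ 2 · (value of the clause's literal sum under σ)`, i.e. the clause is satisfied; `σ ≤ 1` is what
makes the truncated `1 - σ i` the value of a negated literal. -/

theorem Finset.card_univ_sdiff_union_singleton {α : Type*} [Fintype α] [DecidableEq α]
    {s : Finset α} {a : α} (ha : a ∉ s) :
    (univ \ (s ∪ {a})).card = Fintype.card α - (s.card + 1) := by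
  rw [card_univ_sdiff, card_union_of_disjoint (disjoint_singleton_right.2 ha), card_singleton]

theorem G1ineq_self_one {m : ℕ} (x : Fin m → ℕ) {B : Fin 7 → Finset (Fin 7)}
    (hB : ∀ a, (univ \ (B a ∪ {a})).card = (B a).card) :
    G1ineq x x (fun _ => 1) B := by
  intro a
  simp only [sum_const, smul_eq_mul, mul_one, hB a]
  omega

theorem G2ineq_self_one {m : ℕ} (x : Fin m → ℕ) : G2ineq x x (fun _ => 1) := by
  dsimp only [G2ineq]
  omega

theorem clauseIneq_self_one_of_clauseSat {m : ℕ} {σ : Fin m → ℕ} (hσ : ∀ i, σ i ≤ 1)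
    {c : Clause3 m} (hc : clauseSat σ c) : clauseIneq σ σ (fun _ => 1) c := by
  have := hσ c.i
  have := hσ c.j
  have := hσ c.t
  unfold clauseSat at hc
  dsimp only [clauseIneq]
  split_ifs at hc ⊢ <;> omega

/-- A satisfying assignment `σ` of the 3-CNF formula `φ` yields,
via `x i = x' i = σ i` and `α = 1`, a 0/1 solution of the whole system `S(φ)`. -/
theorem satisfying_assignment_solves_system (m : ℕ) (φ : List (Clause3 m))
    (B : Fin 7 → Finset (Fin 7))
    (hB : ∀ a, B a ⊆ Finset.univ \ {a} ∧ (B a).card = 3)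
    (σ : Fin m → ℕ) (hσ : ∀ i, σ i ≤ 1) (hsat : ∀ c ∈ φ, clauseSat σ c) :
    G1ineq σ σ (fun _ => 1) B ∧ G2ineq σ σ (fun _ => 1) ∧
      ∀ c ∈ φ, clauseIneq σ σ (fun _ => 1) c := by
  refine ⟨G1ineq_self_one σ fun a => ?_, G2ineq_self_one σ,
    fun c hc => clauseIneq_self_one_of_clauseSat hσ (hsat c hc)⟩
  obtain ⟨hsub, hcard⟩ := hB a
  have ha : a ∉ B a := fun h => by simpa using hsub h
  rw [card_univ_sdiff_union_singleton ha, hcard, Fintype.card_fin]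
end

section
/- Let φ be a 3-CNF formula over m Boolean variables in which every clause uses three distinct variables, and let S(φ) be the associated system of inequalities over 0/1-valued variables x_1,…,x_m, x_1',…,x_m', α₀, α₁, α₁', α₂, α₂', α₃, α₃' consisting of the 14 group-(G1) inequalities, the 4m group-(G2) inequalities, and one clause inequality per clause of φ. If some 0/1 assignment of all these variables satisfies every inequality of S(φ), then the assignment σ : [m] → {0,1} given by σ(i) = x_i satisfies φ. -/
open Finset

/-!
Adding the two (G1) inequalities of an `α`-variable cancels every sum and leaves `2 ≤ 2α`, so all
`α`-variables equal `1`. With `α₀ = 1`, the four (G2) inequalities for `i` read `u + w ≤ u' + w'`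
for both orders `(u, u')` of `(x i, x' i)` and both orders `(w, w')` of `(R, R')`, the sums of the
other unprimed and primed variables; this forces `x i = x' i`. Substituting `α = 1` and `x' = x`,
every clause inequality becomes twice the corresponding clause of the formula.
-/

lemma G1ineq.eq_one {m : ℕ} {x x' : Fin m → ℕ} {α : Fin 7 → ℕ} {B : Fin 7 → Finset (Fin 7)}
    (h : G1ineq x x' α B) (hα : ∀ a, α a ≤ 1) (a : Fin 7) : α a = 1 := by
  have := h a
  have := hα a
  omega

lemma G2ineq.eq {m : ℕ} {x x' : Fin m → ℕ} {α : Fin 7 → ℕ} (h : G2ineq x x' α)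
    (hα₀ : α 0 = 1) : x = x' := by
  funext i
  have := h i
  have := add_sum_erase _ x (mem_univ i)
  have := add_sum_erase _ x' (mem_univ i)
  omega

lemma clauseSat_of_clauseIneq {m : ℕ} {x : Fin m → ℕ} {α : Fin 7 → ℕ} (hx : ∀ i, x i ≤ 1)
    (hα : ∀ a, α a = 1) (c : Clause3 m) : clauseIneq x x α c → clauseSat x c := by
  rcases c with ⟨i, j, t, neg, -, -, -⟩
  intro h
  have := hx i
  have := hx j
  have := hx t
  fin_cases neg <;>
    simp only [clauseIneq, clauseSat, hα, Fin.reduceEq, Fin.zero_eta, Fin.mk_one,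
      Fin.reduceFinMk, if_true, if_false] at h ⊢ <;>
    omega

theorem system_solution_satisfies_formula_general (m : ℕ) (φ : List (Clause3 m))
    (B : Fin 7 → Finset (Fin 7))
    (x x' : Fin m → ℕ) (α : Fin 7 → ℕ)
    (hx : ∀ i, x i ≤ 1) (hα : ∀ a, α a ≤ 1)
    (h1 : G1ineq x x' α B) (h2 : G2ineq x x' α)
    (h3 : ∀ c ∈ φ, clauseIneq x x' α c) :
    ∀ c ∈ φ, clauseSat x c := by
  have hα₁ := h1.eq_one hα
  obtain rfl := h2.eq (hα₁ 0)
  exact fun c hc => clauseSat_of_clauseIneq hx hα₁ c (h3 c hc)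

/-- Any 0/1 solution of the system `S(φ)` yields a satisfying
assignment of `φ`, namely `σ i = x i`. -/
theorem system_solution_satisfies_formula (m : ℕ) (φ : List (Clause3 m))
    (B : Fin 7 → Finset (Fin 7))
    (hB : ∀ a, B a ⊆ Finset.univ \ {a} ∧ (B a).card = 3)
    (x x' : Fin m → ℕ) (α : Fin 7 → ℕ)
    (hx : ∀ i, x i ≤ 1) (hx' : ∀ i, x' i ≤ 1) (hα : ∀ a, α a ≤ 1)
    (h1 : G1ineq x x' α B) (h2 : G2ineq x x' α)
    (h3 : ∀ c ∈ φ, clauseIneq x x' α c) :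
    ∀ c ∈ φ, clauseSat x c :=
  system_solution_satisfies_formula_general m φ B x x' α hx hα h1 h2 h3
end

section
/- Let d be an even positive integer, n = d/2, and for each i ∈ {1,…,n} let v_i ∈ {0,1}^d be the agent whose j-th coordinate is 1 iff j > d/2 and j ≠ d/2 + i. Let S ⊆ {1,…,n} with |S| = m < d/2, and let x_S ∈ {0,1}^d be the proposal whose coordinates equal 1 exactly at the first d/2 − m − 1 coordinates and at the coordinates d/2 + j for j ∉ S. Then for every i ∉ S, hammingDist(x_S, v_i) ≥ d/2. -/
/-!
The two points disagree on `d/2` coordinates: on the first `d/2 - |S| - 1` ones, where only `x_S`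
is `1`; at `d/2 + i`, where only `x_S` is `1` because `i ∉ S`; and at `d/2 + k` for `k ∈ S`, where
only `v_i` is `1`. These blocks are disjoint, and since `i ∉ S` forces `|S| + 1 ≤ d/2`, the
truncated subtraction is exact and their sizes add up to `d/2`.
-/

open Finset

/-- The agent `v_i ∈ {0,1}^d` (coordinates 0-indexed): its `j`-th coordinate
is `1` iff `j` is among the last `d/2` coordinates and `j ≠ d/2 + i`. -/
def agentV (d : ℕ) (i : Fin (d / 2)) : Fin d → ℕ :=
  fun j => if d / 2 ≤ j.val ∧ j.val ≠ d / 2 + i.val then 1 else 0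

/-- The proposal `x_S ∈ {0,1}^d` (coordinates 0-indexed): its coordinates
equal `1` exactly at the first `d/2 - |S| - 1` coordinates and at the
coordinates `d/2 + j` for `j ∉ S`. -/
def propX (d : ℕ) (S : Finset (Fin (d / 2))) : Fin d → ℕ :=
  fun j => if j.val < d / 2 - S.card - 1 ∨
      (d / 2 ≤ j.val ∧ ∀ k ∈ S, j.val ≠ d / 2 + k.val) then 1 else 0

theorem card_le_hammingDist {ι : Type*} {β : ι → Type*} [Fintype ι] [∀ j, DecidableEq (β j)]
    {x y : ∀ j, β j} {s : Finset ι} (h : ∀ j ∈ s, x j ≠ y j) : #s ≤ hammingDist x y :=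
  card_le_card fun j hj => mem_filter.2 ⟨mem_univ j, h j hj⟩

def upperHalfEmb (d : ℕ) : Fin (d / 2) ↪ Fin d :=
  (Fin.natAddEmb (d / 2)).trans (Fin.castLEEmb (by omega))

@[simp]
theorem upperHalfEmb_val (d : ℕ) (t : Fin (d / 2)) : (upperHalfEmb d t).val = d / 2 + t :=
  rfl

section

variable {d : ℕ}

theorem propX_of_lt (S : Finset (Fin (d / 2))) {j : Fin d} (hj : j.val < d / 2 - #S - 1) :
    propX d S j = 1 :=
  if_pos (Or.inl hj)

theorem agentV_of_lt (i : Fin (d / 2)) {j : Fin d} (hj : j.val < d / 2) : agentV d i j = 0 :=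
  if_neg fun h => by omega

theorem propX_upperHalfEmb (S : Finset (Fin (d / 2))) (t : Fin (d / 2)) :
    propX d S (upperHalfEmb d t) = if t ∈ S then 0 else 1 := by
  simp only [propX, upperHalfEmb_val, Nat.le_add_right, true_and, ne_eq, Nat.add_left_cancel_iff,
    ← Fin.ext_iff]
  by_cases ht : t ∈ S
  · simp only [ht, if_true]
    exact if_neg (by rintro (h | h) <;> [omega; exact h t ht rfl])
  · simp only [ht, if_false]
    exact if_pos (Or.inr fun k hk (hkt : t = k) => ht (hkt ▸ hk))

theorem agentV_upperHalfEmb (i t : Fin (d / 2)) :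
    agentV d i (upperHalfEmb d t) = if t = i then 0 else 1 := by
  simp [agentV, Fin.ext_iff]

end

theorem dist_proposal_outside_coalition_general (d : ℕ)
    (S : Finset (Fin (d / 2))) :
    ∀ i : Fin (d / 2), i ∉ S → d / 2 ≤ hammingDist (propX d S) (agentV d i) := by
  intro i hi
  have hS : #S + 1 ≤ d / 2 := by
    simpa using card_lt_card (ssubset_univ_iff.2 fun h : S = univ => hi (h ▸ mem_univ i))
  set lower : Finset (Fin d) := {j | j.val < d / 2 - #S - 1}
  set upper := (insert i S).map (upperHalfEmb d)
  have hdisj : Disjoint lower upper := by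
    simp only [disjoint_left, lower, upper, mem_filter, mem_map]
    rintro _ ⟨-, hj⟩ ⟨t, -, rfl⟩
    rw [upperHalfEmb_val] at hj
    omega
  have hcard : #(lower ∪ upper) = d / 2 := by
    rw [card_union_of_disjoint hdisj, Fin.card_filter_val_lt, card_map, card_insert_of_notMem hi]
    omega
  refine hcard ▸ card_le_hammingDist fun j hj => ?_
  rcases mem_union.1 hj with hj | hj
  · have hj : j.val < d / 2 - #S - 1 := (mem_filter.1 hj).2
    rw [propX_of_lt S hj, agentV_of_lt i (by omega)]
    exact one_ne_zero
  · obtain ⟨t, ht, rfl⟩ := mem_map.1 hj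
    rw [propX_upperHalfEmb, agentV_upperHalfEmb]
    rcases mem_insert.1 ht with rfl | ht
    · simp [hi]
    · simp [ht, ne_of_mem_of_not_mem ht hi]

/-- every agent `v_i` with `i ∉ S` is at Hamming distance at
least `d/2` from the proposal `x_S`. -/
theorem dist_proposal_outside_coalition (d : ℕ) (hd : 0 < d) (hde : d % 2 = 0)
    (S : Finset (Fin (d / 2))) (hm : S.card < d / 2) :
    ∀ i : Fin (d / 2), i ∉ S → d / 2 ≤ hammingDist (propX d S) (agentV d i) :=
  dist_proposal_outside_coalition_general d S
end

section
/- Let d be an even positive integer, n = d/2, and for each i ∈ {1,…,n} let v_i ∈ {0,1}^d be the agent whose j-th coordinate is 1 iff j > d/2 and j ≠ d/2 + i. Let S ⊆ {1,…,n} with |S| = m < d/2, and let x_S ∈ {0,1}^d be the proposal whose coordinates equal 1 exactly at the first d/2 − m − 1 coordinates and at the coordinates d/2 + j for j ∉ S. Then for every i ∈ {1,…,n}, agent v_i supports x_S if and only if i ∈ S. -/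
open Finset

section Support

variable {ι β : Type*} [Fintype ι] [DecidableEq β] [Zero β] {x v : ι → β}

theorem hammingDist_eq_card_add_card (hxv : ∀ j, x j ≠ 0 → v j ≠ 0 → x j = v j) :
    hammingDist x v = #{j | x j ≠ 0 ∧ v j = 0} + #{j | x j = 0 ∧ v j ≠ 0} := by
  classical
  rw [hammingDist, ← card_union_of_disjoint (disjoint_filter.2 fun j _ h h' => h.1 h'.1),
    ← filter_or]
  congr 1
  ext j
  simp only [mem_filter, mem_univ, true_and]
  grind

theorem hammingDist_zero_eq_card_add_card (x v : ι → β) :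
    hammingDist 0 v = #{j | x j ≠ 0 ∧ v j ≠ 0} + #{j | x j = 0 ∧ v j ≠ 0} := by
  rw [hammingDist_zero_left, hammingNorm, ← card_filter_add_card_filter_not (fun j => x j ≠ 0),
    filter_filter, filter_filter]
  simp only [and_comm, not_not]

theorem hammingDist_lt_hammingDist_zero_iff (hxv : ∀ j, x j ≠ 0 → v j ≠ 0 → x j = v j) :
    hammingDist x v < hammingDist 0 v ↔
      #{j | x j ≠ 0 ∧ v j = 0} < #{j | x j ≠ 0 ∧ v j ≠ 0} := by
  rw [hammingDist_eq_card_add_card hxv, hammingDist_zero_eq_card_add_card x v]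
  omega

end Support

theorem Fin.card_filter_le_val {n m : ℕ} : #{j : Fin n | m ≤ j} = n - m := by
  have := card_filter_add_card_filter_not (s := (univ : Finset (Fin n))) (fun j => (j : ℕ) < m)
  simp only [not_lt, Fin.card_filter_val_lt, card_univ, Fintype.card_fin] at this
  omega

def upperHalf (d : ℕ) : Fin (d / 2) ↪ Fin d :=
  ⟨fun k => ⟨d / 2 + k, by omega⟩, fun a b h => by simpa [Fin.ext_iff] using h⟩

@[simp]
theorem upperHalf_val (d : ℕ) (k : Fin (d / 2)) : (upperHalf d k : ℕ) = d / 2 + k := rfl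

section Construction

variable {d : ℕ} (S : Finset (Fin (d / 2))) (i : Fin (d / 2))

theorem propX_eq_agentV_of_ne_zero (j : Fin d) :
    propX d S j ≠ 0 → agentV d i j ≠ 0 → propX d S j = agentV d i j := by
  unfold propX agentV
  split_ifs <;> simp

theorem card_propX_ne_zero_agentV_eq_zero :
    #{j | propX d S j ≠ 0 ∧ agentV d i j = 0} = d / 2 - #S - 1 + #({i} \ S) := by
  calc #{j | propX d S j ≠ 0 ∧ agentV d i j = 0}
      _ = #(({j | j < d / 2 - #S - 1} : Finset (Fin d)) ∪ ({i} \ S).map (upperHalf d)) := by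
        congr 1
        ext j
        simp only [propX, agentV, mem_filter, mem_univ, true_and, mem_union, mem_sdiff, mem_map,
          mem_singleton, Fin.ext_iff, upperHalf_val]
        grind
      _ = d / 2 - #S - 1 + #({i} \ S) := by
        rw [card_union_of_disjoint (by grind [disjoint_left, upperHalf_val]), card_map,
          Fin.card_filter_val_lt]
        omega

theorem card_propX_ne_zero_agentV_ne_zero :
    #{j | propX d S j ≠ 0 ∧ agentV d i j ≠ 0} = d - d / 2 - #(insert i S) := by
  calc #{j | propX d S j ≠ 0 ∧ agentV d i j ≠ 0}
      _ = #(({j | d / 2 ≤ j} : Finset (Fin d)) \ (insert i S).map (upperHalf d)) := by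
        congr 1
        ext j
        simp only [propX, agentV, mem_filter, mem_univ, true_and, mem_sdiff, mem_map, mem_insert,
          Fin.ext_iff, upperHalf_val]
        grind
      _ = d - d / 2 - #(insert i S) := by
        rw [card_sdiff_of_subset (by simp [subset_iff]), card_map, Fin.card_filter_le_val]

end Construction

theorem supports_proposal_iff_mem_general (d : ℕ)
    (S : Finset (Fin (d / 2))) (hm : S.card < d / 2) :
    ∀ i : Fin (d / 2),
      (hammingDist (propX d S) (agentV d i) <
        hammingDist (0 : Fin d → ℕ) (agentV d i)) ↔ i ∈ S := by
  intro i
  rw [hammingDist_lt_hammingDist_zero_iff (propX_eq_agentV_of_ne_zero S i),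
    card_propX_ne_zero_agentV_eq_zero, card_propX_ne_zero_agentV_ne_zero]
  by_cases hi : i ∈ S
  · rw [sdiff_eq_empty_iff_subset.2 (singleton_subset_iff.2 hi), insert_eq_of_mem hi, card_empty,
      iff_true_intro hi, iff_true]
    omega
  · rw [sdiff_eq_self_of_disjoint (disjoint_singleton_left.2 hi), card_insert_of_notMem hi,
      card_singleton, iff_false_intro hi, iff_false]
    omega

/-- agent `v_i` supports the proposal `x_S` iff `i ∈ S`. -/
theorem supports_proposal_iff_mem (d : ℕ) (hd : 0 < d) (hde : d % 2 = 0)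
    (S : Finset (Fin (d / 2))) (hm : S.card < d / 2) :
    ∀ i : Fin (d / 2),
      (hammingDist (propX d S) (agentV d i) <
        hammingDist (0 : Fin d → ℕ) (agentV d i)) ↔ i ∈ S :=
  supports_proposal_iff_mem_general d S hm
end

section
/- Let d be an even positive integer, n = d/2, and for each i ∈ {1,…,n} let v_i ∈ {0,1}^d be the agent whose j-th coordinate is 1 iff j > d/2 and j ≠ d/2 + i. Then for every subset S ⊆ {1,…,n} with |S| < d/2, there exists a proposal x ∈ {0,1}^d such that the set of agents supporting x is exactly {v_i : i ∈ S}. -/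
/-!
Take `x = propX d S`. On the upper half of the coordinates `x` is the indicator of `Sᶜ` and `v_i`
that of `{i}ᶜ`, so they differ exactly on `S ∆ {i}`; on the lower half `v_i` vanishes and `x` has
`d/2 - |S| - 1` ones. Hence `d(x, v_i) = d/2 - |S| - 1 + |S ∆ {i}|`, which is `d/2 - 2` for `i ∈ S`
and `d/2` for `i ∉ S`, while `d(0, v_i) = d/2 - 1`.
-/

open Finset

open scoped symmDiff

section Hamming

variable {ι β : Type*} [Fintype ι] [DecidableEq β]

theorem hammingDist_eq_add_of_add_eq {m n d : ℕ} (h : m + n = d) (x y : Fin d → β) :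
    hammingDist x y =
      hammingDist (fun k : Fin m => x (Fin.cast h (Fin.castAdd n k)))
          (fun k => y (Fin.cast h (Fin.castAdd n k))) +
        hammingDist (fun k : Fin n => x (Fin.cast h (Fin.natAdd m k)))
          (fun k => y (Fin.cast h (Fin.natAdd m k))) := by
  subst h
  simp only [hammingDist, card_filter, Fin.sum_univ_add, Fin.cast_eq_self]

theorem hammingNorm_ite_mem {M : Type*} [Zero M] [One M] [NeZero (1 : M)] [DecidableEq M]
    [DecidableEq ι] (s : Finset ι) :
    hammingNorm (fun j => if j ∈ s then (1 : M) else 0) = #s := by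
  unfold hammingNorm
  congr 1
  ext j
  by_cases hs : j ∈ s <;> simp [hs]

theorem hammingDist_ite_mem {M : Type*} [Zero M] [One M] [NeZero (1 : M)] [DecidableEq M]
    [DecidableEq ι] (s t : Finset ι) :
    hammingDist (fun j => if j ∈ s then (1 : M) else 0) (fun j => if j ∈ t then 1 else 0) =
      #(s ∆ t) := by
  unfold hammingDist
  congr 1
  ext j
  by_cases hs : j ∈ s <;> by_cases ht : j ∈ t <;> simp [hs, ht, mem_symmDiff]

end Hamming

theorem card_symmDiff_singleton {α : Type*} [DecidableEq α] (s : Finset α) (a : α) :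
    #(s ∆ {a}) = if a ∈ s then #s - 1 else #s + 1 := by
  split_ifs with ha
  · rw [symmDiff_of_ge (singleton_subset_iff.2 ha),
      card_sdiff_of_subset (singleton_subset_iff.2 ha), card_singleton]
  · rw [(disjoint_singleton_right.2 ha).symmDiff_eq_sup, sup_eq_union,
      card_union_of_disjoint (disjoint_singleton_right.2 ha), card_singleton]

section Halves

variable {d : ℕ} (h : d / 2 + d / 2 = d)

theorem agentV_castAdd (i k : Fin (d / 2)) :
    agentV d i (Fin.cast h (Fin.castAdd _ k)) = 0 := by
  simp [agentV]

theorem agentV_natAdd (i k : Fin (d / 2)) :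
    agentV d i (Fin.cast h (Fin.natAdd _ k)) = if k ∈ ({i}ᶜ : Finset _) then 1 else 0 := by
  simp [agentV, add_comm (k : ℕ), Fin.val_inj]

theorem propX_castAdd (S : Finset (Fin (d / 2))) (k : Fin (d / 2)) :
    propX d S (Fin.cast h (Fin.castAdd _ k)) =
      if k ∈ ({k | k.val < d / 2 - #S - 1} : Finset _) then 1 else 0 := by
  simp [propX, k.isLt.not_ge]

theorem propX_natAdd (S : Finset (Fin (d / 2))) (k : Fin (d / 2)) :
    propX d S (Fin.cast h (Fin.natAdd _ k)) = if k ∈ Sᶜ then 1 else 0 := by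
  have : ¬ d / 2 + k < d / 2 - #S - 1 := by omega
  simp [propX, this, add_comm (k : ℕ), Fin.val_inj]

end Halves

theorem hammingDist_zero_agentV {d : ℕ} (hd : d % 2 = 0) (i : Fin (d / 2)) :
    hammingDist (0 : Fin d → ℕ) (agentV d i) = d / 2 - 1 := by
  have h : d / 2 + d / 2 = d := by omega
  rw [hammingDist_eq_add_of_add_eq h]
  simp only [agentV_castAdd h, agentV_natAdd h, Pi.zero_apply]
  rw [← Pi.zero_def, hammingDist_self, zero_add, hammingDist_zero_left, hammingNorm_ite_mem,
    card_compl, card_singleton, Fintype.card_fin]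

theorem hammingDist_propX_agentV {d : ℕ} (hd : d % 2 = 0) (S : Finset (Fin (d / 2)))
    (i : Fin (d / 2)) :
    hammingDist (propX d S) (agentV d i) = (d / 2 - #S - 1) + #(S ∆ {i}) := by
  have h : d / 2 + d / 2 = d := by omega
  rw [hammingDist_eq_add_of_add_eq h]
  simp only [agentV_castAdd h, agentV_natAdd h, propX_castAdd h, propX_natAdd h]
  rw [← Pi.zero_def, hammingDist_zero_right, hammingNorm_ite_mem, Fin.card_filter_val_lt,
    min_eq_right ((Nat.sub_le _ _).trans (Nat.sub_le _ _)), hammingDist_ite_mem,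
    compl_symmDiff_compl]

theorem exists_proposal_supported_exactly_general (d : ℕ) (hde : d % 2 = 0)
    (S : Finset (Fin (d / 2))) (hm : S.card < d / 2) :
    ∃ x : Fin d → ℕ, (∀ j, x j ≤ 1) ∧
      ∀ i : Fin (d / 2),
        (hammingDist x (agentV d i) <
          hammingDist (0 : Fin d → ℕ) (agentV d i)) ↔ i ∈ S := by
  refine ⟨propX d S, fun j => by unfold propX; split <;> omega, fun i => ?_⟩
  rw [hammingDist_propX_agentV hde, hammingDist_zero_agentV hde, card_symmDiff_singleton]
  split_ifs with hi
  · have : 0 < #S := card_pos.2 ⟨i, hi⟩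
    exact iff_of_true (by omega) hi
  · exact iff_of_false (by omega) hi

/-- for every subset `S` of the agents with `|S| < d/2`, there
is a proposal supported exactly by the agents `v_i`, `i ∈ S`. -/
theorem exists_proposal_supported_exactly (d : ℕ) (hd : 0 < d) (hde : d % 2 = 0)
    (S : Finset (Fin (d / 2))) (hm : S.card < d / 2) :
    ∃ x : Fin d → ℕ, (∀ j, x j ≤ 1) ∧
      ∀ i : Fin (d / 2),
        (hammingDist x (agentV d i) <
          hammingDist (0 : Fin d → ℕ) (agentV d i)) ↔ i ∈ S :=
  exists_proposal_supported_exactly_general d hde S hm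
end

section
/- Let v_1,…,v_n ∈ {0,1}^d be agents, and for b ∈ {0,1}^n let n_b be the number of coordinates j ∈ {1,…,d} such that (v_i)_j = b_i for all i (the number of coordinates of type b). Then for every subset S ⊆ {1,…,n}, the following are equivalent: (i) there exists a proposal x ∈ {0,1}^d such that for every i, agent v_i supports x if and only if i ∈ S; (ii) there exist natural numbers (x_b)_{b ∈ {0,1}^n} with x_b ≤ n_b for all b, such that for every i ∈ S, ∑_{b : b_i = 0} x_b + 1 ≤ ∑_{b : b_i = 1} x_b, and for every i ∉ S, ∑_{b : b_i = 1} x_b ≤ ∑_{b : b_i = 0} x_b. -/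
open Finset

/-- The set of coordinates `j ∈ {1,…,d}` of type `b ∈ {0,1}^n`, i.e. with
`(v i) j = b i` for all agents `i`. -/
def typeSet {n d : ℕ} (v : Fin n → Fin d → ℕ) (b : Fin n → Bool) :
    Finset (Fin d) :=
  Finset.univ.filter fun j => ∀ i, v i j = if b i then 1 else 0

/-- `n_b`: the number of coordinates of type `b`. -/
def nB {n d : ℕ} (v : Fin n → Fin d → ℕ) (b : Fin n → Bool) : ℕ :=
  (typeSet v b).card

/-- `x_b`: the number of coordinates of type `b` where the proposal `x`
equals `1`. -/
def xB {n d : ℕ} (v : Fin n → Fin d → ℕ) (x : Fin d → ℕ) (b : Fin n → Bool) : ℕ :=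
  ((typeSet v b).filter fun j => x j = 1).card

/-! For 0/1 vectors, `d(x, w) + #{x_j = w_j = 1} = d(0, w) + #{x_j = 1, w_j = 0}`, so agent `v_i`
supports `x` iff, among the coordinates where `x_j = 1`, more have `(v_i)_j = 1` than `(v_i)_j = 0`.
These two counts are the sums of `x_b` over the types `b` with `b_i = 1`, resp. `b_i = 0`.
Conversely, any `(x_b)` with `x_b ≤ n_b` is realized by setting `x_j = 1` on `x_b` coordinates of
each type `b`. -/

theorem hammingDist_add_card_eq_hammingDist_zero_add_card {ι β : Type*} [Fintype ι]
    [DecidableEq β] [Zero β] (x w : ι → β) :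
    hammingDist x w + #{j | x j ≠ 0 ∧ x j = w j} =
      hammingDist 0 w + #{j | x j ≠ 0 ∧ w j = 0} := by
  simp only [hammingDist, card_filter, ← sum_add_distrib]
  refine sum_congr rfl fun j _ => ?_
  by_cases hx : x j = 0 <;> by_cases hw : w j = 0 <;> by_cases hxw : x j = w j <;>
    simp_all [eq_comm (a := (0 : β))]

theorem hammingDist_lt_hammingDist_zero_iff_s12 {ι : Type*} [Fintype ι] {x w : ι → ℕ}
    (hx : ∀ j, x j ≤ 1) :
    hammingDist x w < hammingDist 0 w ↔
      #{j | x j = 1 ∧ w j = 0} < #{j | x j = 1 ∧ w j = 1} := by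
  have := hammingDist_add_card_eq_hammingDist_zero_add_card x w
  have h₁ : #{j | x j ≠ 0 ∧ x j = w j} = #{j | x j = 1 ∧ w j = 1} := by
    congr 1; ext j; have := hx j; simp only [mem_filter, mem_univ, true_and]; omega
  have h₀ : #{j | x j ≠ 0 ∧ w j = 0} = #{j | x j = 1 ∧ w j = 0} := by
    congr 1; ext j; have := hx j; simp only [mem_filter, mem_univ, true_and]; omega
  omega

section Types

variable {n d : ℕ} {v : Fin n → Fin d → ℕ}

def coordType (v : Fin n → Fin d → ℕ) (j : Fin d) : Fin n → Bool :=
  fun i => decide (v i j = 1)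

theorem mem_typeSet_iff (hv : ∀ i j, v i j ≤ 1) {j : Fin d} {b : Fin n → Bool} :
    j ∈ typeSet v b ↔ coordType v j = b := by
  simp only [typeSet, mem_filter, mem_univ, true_and, funext_iff, coordType]
  refine forall_congr' fun i => ?_
  have := hv i j
  cases b i <;> simp
  omega

theorem sum_xB_filter_eq_card (hv : ∀ i j, v i j ≤ 1) (x : Fin d → ℕ) (i : Fin n)
    (c : Bool) :
    ∑ b ∈ univ.filter (fun b : Fin n → Bool => b i = c), xB v x b =
      #{j | x j = 1 ∧ coordType v j i = c} := by
  rw [card_eq_sum_card_fiberwise (f := coordType v)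
    (t := univ.filter fun b : Fin n → Bool => b i = c)
    fun j hj => by simpa using (mem_filter.1 hj).2.2]
  refine sum_congr rfl fun b hb => congrArg card ?_
  ext j
  simp only [mem_filter, mem_univ, true_and] at hb ⊢
  rw [mem_typeSet_iff hv]
  constructor
  · rintro ⟨rfl, hj⟩; exact ⟨⟨hj, hb⟩, rfl⟩
  · rintro ⟨⟨hj, -⟩, rfl⟩; exact ⟨rfl, hj⟩

theorem supports_iff_sum_xB_lt (hv : ∀ i j, v i j ≤ 1) {x : Fin d → ℕ}
    (hx : ∀ j, x j ≤ 1) (i : Fin n) :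
    hammingDist x (v i) < hammingDist (0 : Fin d → ℕ) (v i) ↔
      ∑ b ∈ univ.filter (fun b : Fin n → Bool => b i = false), xB v x b <
        ∑ b ∈ univ.filter (fun b : Fin n → Bool => b i = true), xB v x b := by
  rw [hammingDist_lt_hammingDist_zero_iff_s12 hx, sum_xB_filter_eq_card hv,
    sum_xB_filter_eq_card hv]
  have h₀ : #{j | x j = 1 ∧ v i j = 0} = #{j | x j = 1 ∧ coordType v j i = false} := by
    congr 1; ext j; have := hv i j
    simp only [mem_filter, mem_univ, true_and, coordType, decide_eq_false_iff_not]; omega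
  have h₁ : #{j | x j = 1 ∧ v i j = 1} = #{j | x j = 1 ∧ coordType v j i = true} := by
    congr 1; ext j; simp [coordType]
  rw [h₀, h₁]

theorem exists_xB_eq (hv : ∀ i j, v i j ≤ 1) {y : (Fin n → Bool) → ℕ}
    (hy : ∀ b, y b ≤ nB v b) : ∃ x : Fin d → ℕ, (∀ j, x j ≤ 1) ∧ xB v x = y := by
  choose T hT hcard using fun b => exists_subset_card_eq (hy b)
  refine ⟨fun j => if j ∈ T (coordType v j) then 1 else 0,
    fun j => by dsimp only; split <;> omega, funext fun b => ?_⟩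
  rw [xB, ← hcard b]
  congr 1
  ext j
  simp only [mem_filter, ite_eq_left_iff, zero_ne_one, imp_false, not_not]
  constructor
  · rintro ⟨hj, hjT⟩
    rwa [(mem_typeSet_iff hv).1 hj] at hjT
  · intro hj
    have hjb := (mem_typeSet_iff hv).1 (hT b hj)
    exact ⟨hT b hj, hjb ▸ hj⟩

end Types

/-- there exists a proposal supported exactly by the agents in
`S` iff the integer linear program on the variables `(x_b)_{b ∈ {0,1}^n}` is
feasible. -/
theorem exists_proposal_iff_ILP_feasible (n d : ℕ) (v : Fin n → Fin d → ℕ)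
    (hv : ∀ i j, v i j ≤ 1) (S : Finset (Fin n)) :
    (∃ x : Fin d → ℕ, (∀ j, x j ≤ 1) ∧
      ∀ i : Fin n,
        (hammingDist x (v i) < hammingDist (0 : Fin d → ℕ) (v i)) ↔ i ∈ S) ↔
    (∃ y : (Fin n → Bool) → ℕ, (∀ b, y b ≤ nB v b) ∧
      (∀ i ∈ S,
        (∑ b ∈ Finset.univ.filter (fun b : Fin n → Bool => b i = false), y b) + 1 ≤
          ∑ b ∈ Finset.univ.filter (fun b : Fin n → Bool => b i = true), y b) ∧
      (∀ i ∉ S,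
        (∑ b ∈ Finset.univ.filter (fun b : Fin n → Bool => b i = true), y b) ≤
          ∑ b ∈ Finset.univ.filter (fun b : Fin n → Bool => b i = false), y b)) := by
  constructor
  · rintro ⟨x, hx, hsupp⟩
    refine ⟨xB v x, fun b => card_filter_le _ _, fun i hi => ?_, fun i hi => ?_⟩
    · exact (supports_iff_sum_xB_lt hv hx i).1 ((hsupp i).2 hi)
    · exact not_lt.1 fun h => hi ((hsupp i).1 ((supports_iff_sum_xB_lt hv hx i).2 h))
  · rintro ⟨y, hy, hS, hnS⟩
    obtain ⟨x, hx, rfl⟩ := exists_xB_eq hv hy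
    refine ⟨x, hx, fun i => ?_⟩
    rw [supports_iff_sum_xB_lt hv hx i]
    exact ⟨fun h => by_contra fun hi => (hnS i hi).not_gt h, hS i⟩
end
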